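/- Let I, J be independent Exponential random variables of rate 1/2 and ω an independent Exponential random variable of rate 1. Define I' = (I − J)⁺ + ω, J' = (J − I)⁺ + ω, and Y = min(I, J). Then (I', J', Y) has the same joint law as (I, J, ω): I' and J' are independent Exponential of rate 1/2, Y is Exponential of rate 1, and I', J', Y are mutually independent. -/

import Mathlib

/-!
Write `D = I - J` and `M = min I J`. The map `(d, m, z) ↦ (d⁺ + m, (-d)⁺ + m, z)` sends
`(D, M, w)` to `(I, J, w)` and `(D, w, M)` to `(I', J', Y)`, so it suffices that swapping the last
two coordinates of `(D, M, w)` preserves its law. By memorylessness, given `M > c` the pair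
`(I - c, J - c)` has the law of `(I, J)`, so `D` is independent of `M`; moreover `M` is
Exponential of rate `1`, like `w`. As `w` is independent of `(I, J)`, the triple `(D, M, w)` is
independent with `M` and `w` identically distributed.
-/

open MeasureTheory ProbabilityTheory Set Real

theorem MeasureTheory.Measure.ext_of_Ioi {α : Type*} [TopologicalSpace α]
    {_ : MeasurableSpace α} [SecondCountableTopology α] [LinearOrder α] [OrderTopology α]
    [BorelSpace α] (μ ν : Measure α) [IsFiniteMeasure μ] (huniv : μ univ = ν univ)
    (h : ∀ a, μ (Ioi a) = ν (Ioi a)) : μ = ν := by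
  have : IsFiniteMeasure ν := ⟨huniv ▸ measure_lt_top μ univ⟩
  refine ext_of_Iic μ ν fun a => ?_
  rw [← compl_Ioi, measure_compl measurableSet_Ioi (measure_ne_top _ _),
    measure_compl measurableSet_Ioi (measure_ne_top _ _), h, huniv]

theorem MeasureTheory.Measure.ext_prod_Ioi {α : Type*} [MeasurableSpace α]
    {μ ν : Measure (α × ℝ)} [IsFiniteMeasure μ] (huniv : μ univ = ν univ)
    (h : ∀ s c, MeasurableSet s → μ (s ×ˢ Ioi c) = ν (s ×ˢ Ioi c)) : μ = ν := by
  have hspan : IsCountablySpanning (range (Ioi : ℝ → Set ℝ)) := by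
    refine ⟨fun n : ℕ => Ioi (-n), fun n => mem_range_self _, eq_univ_of_forall fun x => ?_⟩
    obtain ⟨n, hn⟩ := exists_nat_gt (-x)
    exact mem_iUnion.2 ⟨n, show -(n : ℝ) < x by linarith⟩
  refine ext_of_generate_finite _ (generateFrom_eq_prod MeasurableSpace.generateFrom_measurableSet
    (borel_eq_generateFrom_Ioi ℝ).symm isCountablySpanning_measurableSet hspan).symm
    (MeasurableSpace.isPiSystem_measurableSet.prod isPiSystem_Ioi) ?_ huniv
  rintro _ ⟨s, hs, _, ⟨c, rfl⟩, rfl⟩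
  exact h s c hs

lemma expMeasure_Ioi {r : ℝ} (hr : 0 < r) (t : ℝ) :
    expMeasure r (Ioi t) = ENNReal.ofReal (exp (-(r * max t 0))) := by
  have := isProbabilityMeasure_expMeasure hr
  rw [← compl_Iic, prob_compl_eq_one_sub measurableSet_Iic, ← ofReal_cdf, cdf_expMeasure_eq hr,
    ← ENNReal.ofReal_one, ← ENNReal.ofReal_sub _ (by split_ifs <;> simp [mul_nonneg hr.le, *])]
  congr 1
  split_ifs with ht
  · simp [max_eq_left ht]
  · simp [max_eq_right (not_le.1 ht).le]

lemma hasLaw_expMeasure_of_measure_lt {Ω : Type*} [MeasurableSpace Ω] {μ : Measure Ω}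
    [IsProbabilityMeasure μ] {X : Ω → ℝ} (hX : Measurable X) {r : ℝ} (hr : 0 < r)
    (h : ∀ s, 0 ≤ s → μ {ω | s < X ω} = ENNReal.ofReal (exp (-(r * s)))) :
    HasLaw X (expMeasure r) μ where
  aemeasurable := hX.aemeasurable
  map_eq := by
    have := isProbabilityMeasure_expMeasure hr
    refine Measure.ext_of_Ioi _ _ (by simp [Measure.map_apply hX .univ]) fun t => ?_
    rw [Measure.map_apply hX measurableSet_Ioi, expMeasure_Ioi hr]
    rcases le_total 0 t with ht | ht
    · rw [max_eq_left ht]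
      exact h t ht
    · rw [max_eq_right ht, mul_zero, neg_zero, exp_zero, ENNReal.ofReal_one]
      refine le_antisymm prob_le_one ?_
      calc (1 : ENNReal) = μ {ω | 0 < X ω} := by simpa using (h 0 le_rfl).symm
        _ ≤ μ (X ⁻¹' Ioi t) := measure_mono fun ω (hω : 0 < X ω) => ht.trans_lt hω

/-- The shift is by `max c 0` rather than `c`: for `c < 0` the restriction does nothing, as
`expMeasure r` lives on `[0, ∞)`. -/
lemma map_sub_restrict_Ioi_expMeasure {r : ℝ} (hr : 0 < r) (c : ℝ) :
    ((expMeasure r).restrict (Ioi c)).map (· - max c 0)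
      = expMeasure r (Ioi c) • expMeasure r := by
  have := isProbabilityMeasure_expMeasure hr
  have hm : Measurable fun x : ℝ => x - max c 0 := measurable_sub_const _
  refine Measure.ext_of_Ioi _ _ (by simp [Measure.map_apply hm .univ]) fun t => ?_
  rw [Measure.map_apply hm measurableSet_Ioi, preimage_sub_const_Ioi,
    Measure.restrict_apply measurableSet_Ioi, Ioi_inter_Ioi, Measure.smul_apply, smul_eq_mul,
    expMeasure_Ioi hr, expMeasure_Ioi hr, expMeasure_Ioi hr, ← ENNReal.ofReal_mul (exp_pos _).le,
    ← exp_add]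
  have hmax : max (max (t + max c 0) c) 0 = max c 0 + max t 0 := by
    simp only [max_def]
    split_ifs <;> linarith
  rw [hmax]
  congr 2
  ring

lemma map_sub_restrict_Ioi_prod_expMeasure {r : ℝ} (hr : 0 < r) (c : ℝ) :
    (((expMeasure r).prod (expMeasure r)).restrict (Ioi c ×ˢ Ioi c)).map
        (Prod.map (· - max c 0) (· - max c 0))
      = (expMeasure r (Ioi c) * expMeasure r (Ioi c)) • (expMeasure r).prod (expMeasure r) := by
  have := isProbabilityMeasure_expMeasure hr
  rw [← Measure.prod_restrict,
    ← Measure.map_prod_map _ _ (measurable_sub_const _) (measurable_sub_const _),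
    map_sub_restrict_Ioi_expMeasure hr, Measure.prod_smul_left, Measure.prod_smul_right,
    smul_smul]

/-- On `{min > c}` the difference is unchanged by the shift in
`map_sub_restrict_Ioi_prod_expMeasure`, so its law there is the full law scaled by `P(min > c)`. -/
theorem map_sub_min_expMeasure_prod {r : ℝ} (hr : 0 < r) :
    ((expMeasure r).prod (expMeasure r)).map (fun p => (p.1 - p.2, min p.1 p.2))
      = (((expMeasure r).prod (expMeasure r)).map fun p => p.1 - p.2).prod
          (((expMeasure r).prod (expMeasure r)).map fun p => min p.1 p.2) := by
  have := isProbabilityMeasure_expMeasure hr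
  set P := (expMeasure r).prod (expMeasure r)
  have hD : Measurable fun p : ℝ × ℝ => p.1 - p.2 := by fun_prop
  have hM : Measurable fun p : ℝ × ℝ => min p.1 p.2 := by fun_prop
  refine Measure.ext_prod_Ioi ?_ fun s c hs => ?_
  · have := Measure.isProbabilityMeasure_map (μ := P) hD.aemeasurable
    have := Measure.isProbabilityMeasure_map (μ := P) hM.aemeasurable
    have := Measure.isProbabilityMeasure_map (μ := P) (hD.prodMk hM).aemeasurable
    simp
  have hDs : MeasurableSet ((fun p : ℝ × ℝ => p.1 - p.2) ⁻¹' s) := hD hs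
  have hshift : Prod.map (· - max c 0) (· - max c 0) ⁻¹' ((fun p : ℝ × ℝ => p.1 - p.2) ⁻¹' s)
      = (fun p : ℝ × ℝ => p.1 - p.2) ⁻¹' s := by
    ext p; simp
  have hmin : (fun p : ℝ × ℝ => min p.1 p.2) ⁻¹' Ioi c = Ioi c ×ˢ Ioi c := by
    ext p; simp
  calc P.map (fun p => (p.1 - p.2, min p.1 p.2)) (s ×ˢ Ioi c)
      = (P.restrict (Ioi c ×ˢ Ioi c)) ((fun p : ℝ × ℝ => p.1 - p.2) ⁻¹' s) := by
        rw [Measure.map_apply (hD.prodMk hM) (hs.prod measurableSet_Ioi),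
          Measure.restrict_apply hDs, mk_preimage_prod, hmin]
    _ = ((P.restrict (Ioi c ×ˢ Ioi c)).map (Prod.map (· - max c 0) (· - max c 0)))
          ((fun p : ℝ × ℝ => p.1 - p.2) ⁻¹' s) := by
        rw [Measure.map_apply (by fun_prop) hDs, hshift]
    _ = _ := by
        rw [map_sub_restrict_Ioi_prod_expMeasure hr, Measure.smul_apply, smul_eq_mul,
          Measure.prod_prod, Measure.map_apply hD hs, Measure.map_apply hM measurableSet_Ioi,
          hmin, Measure.prod_prod, mul_comm]

section RandomVariables

variable {Ω : Type*} [MeasurableSpace Ω] {μ : Measure Ω}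

theorem indepFun_sub_min_of_hasLaw_expMeasure [IsProbabilityMeasure μ] {I J : Ω → ℝ} {r : ℝ}
    (hr : 0 < r) (hI : HasLaw I (expMeasure r) μ) (hJ : HasLaw J (expMeasure r) μ)
    (hIJ : IndepFun I J μ) :
    IndepFun (fun ω => I ω - J ω) (fun ω => min (I ω) (J ω)) μ := by
  have hX : AEMeasurable (fun ω => (I ω, J ω)) μ := by fun_prop
  have hD : Measurable fun p : ℝ × ℝ => p.1 - p.2 := by fun_prop
  have hM : Measurable fun p : ℝ × ℝ => min p.1 p.2 := by fun_prop
  have key := map_sub_min_expMeasure_prod hr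
  rw [← (hIJ.hasLaw_prod hI hJ).map_eq,
    AEMeasurable.map_map_of_aemeasurable (hD.prodMk hM).aemeasurable hX,
    AEMeasurable.map_map_of_aemeasurable hD.aemeasurable hX,
    AEMeasurable.map_map_of_aemeasurable hM.aemeasurable hX] at key
  exact (indepFun_iff_map_prod_eq_prod_map_map (by fun_prop) (by fun_prop)).2 key

theorem hasLaw_min_of_hasLaw_expMeasure [IsProbabilityMeasure μ] {I J : Ω → ℝ} {r s : ℝ}
    (hr : 0 < r) (hs : 0 < s) (hI : HasLaw I (expMeasure r) μ) (hJ : HasLaw J (expMeasure s) μ)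
    (hIJ : IndepFun I J μ) :
    HasLaw (fun ω => min (I ω) (J ω)) (expMeasure (r + s)) μ where
  map_eq := by
    have := isProbabilityMeasure_expMeasure (add_pos hr hs)
    have hM : AEMeasurable (fun ω => min (I ω) (J ω)) μ := by fun_prop
    have := Measure.isProbabilityMeasure_map (μ := μ) hM
    refine Measure.ext_of_Ioi _ _ (by simp) fun t => ?_
    have hpre : (fun ω => min (I ω) (J ω)) ⁻¹' Ioi t = I ⁻¹' Ioi t ∩ J ⁻¹' Ioi t := by
      ext ω; simp
    rw [Measure.map_apply_of_aemeasurable hM measurableSet_Ioi, hpre,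
      hIJ.measure_inter_preimage_eq_mul _ _ measurableSet_Ioi measurableSet_Ioi,
      ← Measure.map_apply_of_aemeasurable hI.aemeasurable measurableSet_Ioi,
      ← Measure.map_apply_of_aemeasurable hJ.aemeasurable measurableSet_Ioi, hI.map_eq,
      hJ.map_eq, expMeasure_Ioi hr, expMeasure_Ioi hs, expMeasure_Ioi (add_pos hr hs),
      ← ENNReal.ofReal_mul (exp_pos _).le, ← exp_add]
    congr 2
    ring

theorem map_prodMk_swap_eq_of_indepFun [IsFiniteMeasure μ] {α β : Type*} [MeasurableSpace α]
    [MeasurableSpace β] {X : Ω → α} {Y Z : Ω → β} (hX : Measurable X) (hY : Measurable Y)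
    (hZ : Measurable Z) (hXY : IndepFun X Y μ) (hXYZ : IndepFun (fun ω => (X ω, Y ω)) Z μ)
    (hYZ : μ.map Y = μ.map Z) :
    μ.map (fun ω => (X ω, Z ω, Y ω)) = μ.map (fun ω => (X ω, Y ω, Z ω)) := by
  have hlaw : ∀ {B}, MeasurableSet B → μ (Z ⁻¹' B) = μ (Y ⁻¹' B) := fun hB => by
    rw [← Measure.map_apply hZ hB, ← hYZ, Measure.map_apply hY hB]
  have hrect : ∀ {A B C}, MeasurableSet A → MeasurableSet B → MeasurableSet C →
      μ (X ⁻¹' A ∩ Y ⁻¹' B ∩ Z ⁻¹' C) = μ (X ⁻¹' A) * μ (Y ⁻¹' B) * μ (Y ⁻¹' C) :=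
    fun hA hB hC => by
      rw [← mk_preimage_prod, hXYZ.measure_inter_preimage_eq_mul _ _ (hA.prod hB) hC,
        mk_preimage_prod, hXY.measure_inter_preimage_eq_mul _ _ hA hB, hlaw hC]
  refine Measure.ext_prod₃ fun hA hB hC => ?_
  rw [Measure.map_apply (by fun_prop) (hA.prod (hB.prod hC)),
    Measure.map_apply (by fun_prop) (hA.prod (hB.prod hC))]
  simp only [mk_preimage_prod, ← inter_assoc]
  rw [inter_right_comm, hrect hA hC hB, hrect hA hB hC, mul_right_comm]

end RandomVariables

def ofSubMin (p : ℝ × ℝ × ℝ) : ℝ × ℝ × ℝ :=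
  (max p.1 0 + p.2.1, max (-p.1) 0 + p.2.1, p.2.2)

lemma measurable_ofSubMin : Measurable ofSubMin := by
  unfold ofSubMin
  fun_prop

lemma ofSubMin_sub_min (a b z : ℝ) : ofSubMin (a - b, min a b, z) = (a, b, z) := by
  rcases le_total a b with h | h <;> simp [ofSubMin, h]

/-- One-step Burke property: if `I, J` are independent Exponential of rate `1/2`
and `w` an independent Exponential of rate `1`, then with
`I' = (I − J)⁺ + w`, `J' = (J − I)⁺ + w` and `Y = min(I,J)`, the triple
`(I', J', Y)` has the same joint law as `(I, J, w)`. -/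
theorem burke_one_step {Ω : Type*} [MeasurableSpace Ω] (μ : Measure Ω)
    [IsProbabilityMeasure μ] (I J w : Ω → ℝ)
    (hI : Measurable I) (hJ : Measurable J) (hw : Measurable w)
    (hind : iIndepFun (m := fun _ => (inferInstance : MeasurableSpace ℝ)) ![I, J, w] μ)
    (hId : ∀ s : ℝ, 0 ≤ s → μ {ω | s < I ω} = ENNReal.ofReal (Real.exp (-(s / 2))))
    (hJd : ∀ s : ℝ, 0 ≤ s → μ {ω | s < J ω} = ENNReal.ofReal (Real.exp (-(s / 2))))
    (hwd : ∀ s : ℝ, 0 ≤ s → μ {ω | s < w ω} = ENNReal.ofReal (Real.exp (-s))) :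
    Measure.map (fun ω0 =>
        (max (I ω0 - J ω0) 0 + w ω0, max (J ω0 - I ω0) 0 + w ω0,
          min (I ω0) (J ω0))) μ
      = Measure.map (fun ω0 => (I ω0, J ω0, w ω0)) μ := by
  have hhalf : (0 : ℝ) < 1 / 2 := by norm_num
  have lawI := hasLaw_expMeasure_of_measure_lt hI hhalf fun s hs => by
    rw [hId s hs, one_div_mul_eq_div]
  have lawJ := hasLaw_expMeasure_of_measure_lt hJ hhalf fun s hs => by
    rw [hJd s hs, one_div_mul_eq_div]
  have laww := hasLaw_expMeasure_of_measure_lt hw one_pos fun s hs => by rw [hwd s hs, one_mul]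
  have hIJ : IndepFun I J μ := hind.indepFun (i := 0) (j := 1) (by decide)
  have hIJw : IndepFun (fun ω => (I ω, J ω)) w μ := by
    simpa using hind.indepFun_prodMk (fun i => by fin_cases i <;> assumption) 0 1 2
      (by decide) (by decide)
  have lawM := hasLaw_min_of_hasLaw_expMeasure hhalf hhalf lawI lawJ hIJ
  rw [add_halves] at lawM
  have hswap := map_prodMk_swap_eq_of_indepFun (by fun_prop) (by fun_prop) hw
    (indepFun_sub_min_of_hasLaw_expMeasure hhalf lawI lawJ hIJ)
    (hIJw.comp (φ := fun p => (p.1 - p.2, min p.1 p.2)) (by fun_prop) measurable_id)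
    (lawM.map_eq.trans laww.map_eq.symm)
  calc _ = (μ.map fun ω => (I ω - J ω, w ω, min (I ω) (J ω))).map ofSubMin := by
        rw [Measure.map_map measurable_ofSubMin (by fun_prop)]
        simp only [Function.comp_def, ofSubMin, neg_sub]
    _ = (μ.map fun ω => (I ω - J ω, min (I ω) (J ω), w ω)).map ofSubMin := by rw [hswap]
    _ = _ := by
        rw [Measure.map_map measurable_ofSubMin (by fun_prop)]
        simp only [Function.comp_def, ofSubMin_sub_min]
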